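/- arXiv:2504.03809 — 2 statements merged into one kernel-verified Lean document; each statement's English description precedes it below -/
import Mathlib

section
/- If m is a positive integer divisible by 4, then POS(ID_m, AN_m) = m²/4. -/
open Finset

/-- Earth mover's distance between two vectors in ℝ^m: the ℓ1-distance
between their prefix-sum vectors. -/
noncomputable def emd {m : ℕ} (x y : Fin m → ℝ) : ℝ :=
  ∑ k : Fin m, |(∑ i ∈ Finset.Iic k, x i) - (∑ i ∈ Finset.Iic k, y i)|

/-- The positionwise distance between two m×m matrices: the minimum over
permutations σ of the sum of EMD distances between matched columns. -/
noncomputable def POS {m : ℕ} (X Y : Matrix (Fin m) (Fin m) ℝ) : ℝ :=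
  Finset.univ.inf' Finset.univ_nonempty
    (fun σ : Equiv.Perm (Fin m) => ∑ j : Fin m, emd (fun i => X i j) (fun i => Y i (σ j)))

/-- A matrix is bistochastic (a frequency matrix) if its entries are
nonnegative and every row and every column sums to 1. -/
def Bistochastic {m : ℕ} (X : Matrix (Fin m) (Fin m) ℝ) : Prop :=
  (∀ i j, 0 ≤ X i j) ∧ (∀ i, ∑ j, X i j = 1) ∧ (∀ j, ∑ i, X i j = 1)

/-- The identity frequency matrix ID_m. -/
noncomputable def IDmat (m : ℕ) : Matrix (Fin m) (Fin m) ℝ :=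
  fun i j => if i = j then 1 else 0

/-- The uniformity frequency matrix UN_m. -/
noncomputable def UNmat (m : ℕ) : Matrix (Fin m) (Fin m) ℝ :=
  fun _ _ => 1 / m

/-- The antagonism frequency matrix AN_m = (ID_m + rID_m)/2: entries 1/2 at
positions (i,i) and (i, m+1-i) (1-indexed), i.e. (i,j) with i+j+1 = m in
0-indexed terms. -/
noncomputable def ANmat (m : ℕ) : Matrix (Fin m) (Fin m) ℝ :=
  fun i j => ((if i = j then 1 else 0) + (if (i : ℕ) + (j : ℕ) + 1 = m then 1 else 0)) / 2

/-- The stratification frequency matrix ST_m: block-diagonal with two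
(m/2)×(m/2) blocks of entries 2/m. -/
noncomputable def STmat (m : ℕ) : Matrix (Fin m) (Fin m) ℝ :=
  fun i j => if (((i : ℕ) < m / 2) ↔ ((j : ℕ) < m / 2)) then 2 / m else 0

/-!
Each column `a` of `AN_m` is the midpoint of the columns `a` and `rev a` of `ID_m`. The prefix sums
of a point mass are `0` or `1`, and for `p ∈ {0, 1}`, `q, r ∈ [0, 1]` one has
`|p - (q + r) / 2| ≥ |q - r| / 2`, with equality when `p = q`. Hence matching column `j` of `ID_m`
to column `a` of `AN_m` costs at least `|a - rev a| / 2`, with equality for `j = a`: the identity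
matching is optimal, and its cost `∑ₐ |2a + 1 - m| / 2` is `m² / 4` for even `m`.
-/

lemma emd_comm {m : ℕ} (x y : Fin m → ℝ) : emd x y = emd y x := by
  simp only [emd, abs_sub_comm]

lemma sum_Iic_midpoint {m : ℕ} (y z : Fin m → ℝ) (k : Fin m) :
    ∑ i ∈ Iic k, (y i + z i) / 2 = (∑ i ∈ Iic k, y i + ∑ i ∈ Iic k, z i) / 2 := by
  rw [← sum_div, sum_add_distrib]

lemma emd_self_midpoint {m : ℕ} (x y : Fin m → ℝ) :
    emd x (fun i => (x i + y i) / 2) = emd x y / 2 := by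
  simp only [emd, sum_Iic_midpoint, sum_div]
  refine sum_congr rfl fun k _ => ?_
  rw [← abs_two, ← abs_div]
  congr 1
  ring

lemma half_abs_sub_le_abs_sub_midpoint {p q r : ℝ} (hp : p = 0 ∨ p = 1)
    (hq : q ∈ Set.Icc 0 1) (hr : r ∈ Set.Icc 0 1) : |q - r| / 2 ≤ |p - (q + r) / 2| := by
  obtain ⟨hq₀, hq₁⟩ := hq
  obtain ⟨hr₀, hr₁⟩ := hr
  rcases hp with rfl | rfl
  · have : |q - r| ≤ q + r := abs_le.mpr ⟨by linarith, by linarith⟩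
    rw [abs_of_nonpos (show (0 : ℝ) - (q + r) / 2 ≤ 0 by linarith)]
    linarith
  · have : |q - r| ≤ 2 - (q + r) := abs_le.mpr ⟨by linarith, by linarith⟩
    rw [abs_of_nonneg (show (0 : ℝ) ≤ 1 - (q + r) / 2 by linarith)]
    linarith

lemma half_emd_le_emd_midpoint {m : ℕ} {x y z : Fin m → ℝ}
    (hx : ∀ k, ∑ i ∈ Iic k, x i = 0 ∨ ∑ i ∈ Iic k, x i = 1)
    (hy : ∀ k, ∑ i ∈ Iic k, y i ∈ Set.Icc 0 1) (hz : ∀ k, ∑ i ∈ Iic k, z i ∈ Set.Icc 0 1) :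
    emd y z / 2 ≤ emd x (fun i => (y i + z i) / 2) := by
  simp only [emd, sum_Iic_midpoint, sum_div]
  exact sum_le_sum fun k _ => half_abs_sub_le_abs_sub_midpoint (hx k) (hy k) (hz k)

lemma sum_Iic_IDmat {m : ℕ} (j k : Fin m) :
    ∑ i ∈ Iic k, IDmat m i j = if j ≤ k then 1 else 0 := by
  simp only [IDmat, sum_ite_eq', mem_Iic]

lemma emd_IDmat {m : ℕ} (a b : Fin m) :
    emd (fun i => IDmat m i a) (fun i => IDmat m i b) = |(a : ℝ) - b| := by
  wlog hab : a ≤ b generalizing a b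
  · rw [emd_comm, this b a (le_of_not_ge hab), abs_sub_comm]
  have hterm : ∀ k : Fin m, |(if a ≤ k then (1 : ℝ) else 0) - if b ≤ k then 1 else 0|
      = if k ∈ Ico a b then 1 else 0 := by
    intro k
    simp only [mem_Ico, Fin.le_def, Fin.lt_def]
    split_ifs <;> norm_num <;> omega
  simp only [emd, sum_Iic_IDmat, hterm, sum_ite_mem, univ_inter, sum_const, Fin.card_Ico,
    nsmul_eq_mul, mul_one]
  rw [Nat.cast_sub hab, abs_of_nonpos (by simpa using hab), neg_sub]

lemma ANmat_col_eq_midpoint {m : ℕ} (a : Fin m) :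
    (fun i => ANmat m i a) = fun i => (IDmat m i a + IDmat m i a.rev) / 2 := by
  ext i
  simp only [ANmat, IDmat, Fin.ext_iff, Fin.val_rev]
  congr 3
  apply propext
  omega

lemma half_emd_IDmat_rev_le_emd_ANmat {m : ℕ} (j a : Fin m) :
    emd (fun i => IDmat m i a) (fun i => IDmat m i a.rev) / 2
      ≤ emd (fun i => IDmat m i j) (fun i => ANmat m i a) := by
  have hprefix : ∀ b k : Fin m, ∑ i ∈ Iic k, IDmat m i b ∈ Set.Icc 0 1 := by
    intro b k
    rw [sum_Iic_IDmat]
    split_ifs <;> norm_num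
  rw [ANmat_col_eq_midpoint]
  refine half_emd_le_emd_midpoint (fun k => ?_) (hprefix a) (hprefix a.rev)
  rw [sum_Iic_IDmat]
  split_ifs <;> simp

lemma emd_IDmat_ANmat_self {m : ℕ} (a : Fin m) :
    emd (fun i => IDmat m i a) (fun i => ANmat m i a)
      = emd (fun i => IDmat m i a) (fun i => IDmat m i a.rev) / 2 := by
  rw [ANmat_col_eq_midpoint, emd_self_midpoint]

lemma POS_eq_sum_of_le_of_eq {m : ℕ} {X Y : Matrix (Fin m) (Fin m) ℝ} (g : Fin m → ℝ)
    (hle : ∀ j a, g a ≤ emd (fun i => X i j) (fun i => Y i a))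
    (heq : ∀ a, emd (fun i => X i a) (fun i => Y i a) = g a) :
    POS X Y = ∑ a, g a := by
  apply le_antisymm
  · exact (inf'_le _ (mem_univ 1)).trans_eq (sum_congr rfl fun a _ => heq a)
  · refine le_inf' _ _ fun σ _ => ?_
    rw [← Equiv.sum_comp σ g]
    exact sum_le_sum fun j _ => hle j (σ j)

lemma sum_range_abs_two_mul_add_one_sub (t : ℕ) :
    ∑ a ∈ range (2 * t), |2 * (a : ℝ) + 1 - 2 * t| = 2 * t ^ 2 := by
  induction t with
  | zero => simp
  | succ t ih =>
    rw [show 2 * (t + 1) = 2 * t + 1 + 1 by ring, sum_range_succ, sum_range_succ']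
    have hshift : ∀ a : ℕ, |2 * ((a + 1 : ℕ) : ℝ) + 1 - 2 * ((t + 1 : ℕ) : ℝ)|
        = |2 * (a : ℝ) + 1 - 2 * t| := fun a => by push_cast; ring_nf
    simp only [hshift, ih]
    push_cast
    have ht : (0 : ℝ) ≤ t := t.cast_nonneg
    rw [abs_of_nonpos (by linarith), abs_of_nonneg (by linarith)]
    ring

lemma sum_abs_sub_rev_of_even {m : ℕ} (hm : Even m) :
    ∑ a : Fin m, |(a : ℝ) - a.rev| = (m : ℝ) ^ 2 / 2 := by
  obtain ⟨t, rfl⟩ := hm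
  have hrev : ∀ a : Fin (t + t), |(a : ℝ) - a.rev| = |2 * (a : ℝ) + 1 - 2 * t| := by
    intro a
    rw [Fin.val_rev, Nat.cast_sub (by omega)]
    push_cast
    ring_nf
  simp only [hrev]
  rw [Fin.sum_univ_eq_sum_range (fun a : ℕ => |2 * (a : ℝ) + 1 - 2 * t|), ← two_mul,
    sum_range_abs_two_mul_add_one_sub]
  push_cast
  ring

theorem pos_ID_AN_general (m : ℕ) (h4 : 4 ∣ m) :
    POS (IDmat m) (ANmat m) = (m : ℝ) ^ 2 / 4 := by
  have hm : Even m := even_iff_two_dvd.mpr ((dvd_mul_right 2 2).trans h4)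
  rw [POS_eq_sum_of_le_of_eq _ half_emd_IDmat_rev_le_emd_ANmat emd_IDmat_ANmat_self]
  simp only [emd_IDmat, ← sum_div, sum_abs_sub_rev_of_even hm]
  ring

theorem pos_ID_AN (m : ℕ) (hm : 0 < m) (h4 : 4 ∣ m) :
    POS (IDmat m) (ANmat m) = (m : ℝ) ^ 2 / 4 :=
  pos_ID_AN_general m h4
end

section
/- Let X and Y be m×m bistochastic matrices with column vectors x_1,…,x_m and y_1,…,y_m such that POS(X,Y) = Σ_{i=1}^m emd(x_i, y_i) (i.e., the identity matching of columns witnesses the positionwise distance). Then for every α ∈ [0,1], the matrix Z = αX + (1−α)Y is bistochastic and POS(X,Y) = POS(X,Z) + POS(Z,Y). -/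
open Finset

lemma POS_le {m : ℕ} (X Y : Matrix (Fin m) (Fin m) ℝ) (σ : Equiv.Perm (Fin m)) :
    POS X Y ≤ ∑ j : Fin m, emd (fun i => X i j) (fun i => Y i (σ j)) :=
  Finset.inf'_le _ (Finset.mem_univ σ)

lemma emd_triangle {m : ℕ} (x y z : Fin m → ℝ) : emd x z ≤ emd x y + emd y z := by
  unfold emd
  rw [← Finset.sum_add_distrib]
  apply Finset.sum_le_sum
  intro k _
  exact abs_sub_le _ _ _

theorem pos_convex_path {m : ℕ} (X Y : Matrix (Fin m) (Fin m) ℝ)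
    (hX : Bistochastic X) (hY : Bistochastic Y)
    (hid : POS X Y = ∑ j : Fin m, emd (fun i => X i j) (fun i => Y i j))
    (α : ℝ) (hα : α ∈ Set.Icc (0 : ℝ) 1) :
    Bistochastic (α • X + (1 - α) • Y) ∧
    POS X Y = POS X (α • X + (1 - α) • Y) + POS (α • X + (1 - α) • Y) Y := by
  obtain ⟨hα0, hα1⟩ := hα
  set Z := α • X + (1 - α) • Y with hZ
  have hZapp : ∀ i j, Z i j = α * X i j + (1 - α) * Y i j := by
    intro i j
    simp [hZ, Matrix.add_apply, Matrix.smul_apply, smul_eq_mul]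
  have hbis : Bistochastic Z := by
    refine ⟨fun i j => ?_, fun i => ?_, fun j => ?_⟩
    · rw [hZapp]
      have := hX.1 i j
      have := hY.1 i j
      nlinarith
    · simp only [hZapp]
      rw [Finset.sum_add_distrib, ← Finset.mul_sum, ← Finset.mul_sum, hX.2.1 i, hY.2.1 i]
      ring
    · simp only [hZapp]
      rw [Finset.sum_add_distrib, ← Finset.mul_sum, ← Finset.mul_sum, hX.2.2 j, hY.2.2 j]
      ring
  refine ⟨hbis, ?_⟩
  -- emd scaling identities
  have hXZ : ∀ j : Fin m, emd (fun i => X i j) (fun i => Z i j)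
      = (1 - α) * emd (fun i => X i j) (fun i => Y i j) := by
    intro j
    unfold emd
    rw [Finset.mul_sum]
    apply Finset.sum_congr rfl
    intro k _
    simp only [hZapp]
    rw [Finset.sum_add_distrib, ← Finset.mul_sum, ← Finset.mul_sum]
    rw [show (∑ i ∈ Finset.Iic k, X i j) - (α * ∑ i ∈ Finset.Iic k, X i j
        + (1 - α) * ∑ i ∈ Finset.Iic k, Y i j)
      = (1 - α) * ((∑ i ∈ Finset.Iic k, X i j) - ∑ i ∈ Finset.Iic k, Y i j) by ring]
    rw [abs_mul, abs_of_nonneg (by linarith)]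
  have hZY : ∀ j : Fin m, emd (fun i => Z i j) (fun i => Y i j)
      = α * emd (fun i => X i j) (fun i => Y i j) := by
    intro j
    unfold emd
    rw [Finset.mul_sum]
    apply Finset.sum_congr rfl
    intro k _
    simp only [hZapp]
    rw [Finset.sum_add_distrib, ← Finset.mul_sum, ← Finset.mul_sum]
    rw [show (α * ∑ i ∈ Finset.Iic k, X i j
        + (1 - α) * ∑ i ∈ Finset.Iic k, Y i j) - (∑ i ∈ Finset.Iic k, Y i j)
      = α * ((∑ i ∈ Finset.Iic k, X i j) - ∑ i ∈ Finset.Iic k, Y i j) by ring]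
    rw [abs_mul, abs_of_nonneg hα0]
  have hle1 : POS X Z ≤ (1 - α) * POS X Y := by
    calc POS X Z ≤ ∑ j : Fin m, emd (fun i => X i j) (fun i => Z i ((1 : Equiv.Perm (Fin m)) j)) :=
          POS_le X Z 1
      _ = (1 - α) * POS X Y := by
          rw [hid, Finset.mul_sum]
          exact Finset.sum_congr rfl fun j _ => hXZ j
  have hle2 : POS Z Y ≤ α * POS X Y := by
    calc POS Z Y ≤ ∑ j : Fin m, emd (fun i => Z i j) (fun i => Y i ((1 : Equiv.Perm (Fin m)) j)) :=
          POS_le Z Y 1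
      _ = α * POS X Y := by
          rw [hid, Finset.mul_sum]
          exact Finset.sum_congr rfl fun j _ => hZY j
  have htri : POS X Y ≤ POS X Z + POS Z Y := by
    obtain ⟨σ₁, _, h1⟩ := Finset.exists_mem_eq_inf' (Finset.univ_nonempty)
      (fun σ : Equiv.Perm (Fin m) => ∑ j : Fin m, emd (fun i => X i j) (fun i => Z i (σ j)))
    obtain ⟨σ₂, _, h2⟩ := Finset.exists_mem_eq_inf' (Finset.univ_nonempty)
      (fun σ : Equiv.Perm (Fin m) => ∑ j : Fin m, emd (fun i => Z i j) (fun i => Y i (σ j)))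
    have step1 : POS X Y ≤ ∑ j : Fin m, emd (fun i => X i j) (fun i => Y i ((σ₂ * σ₁ : Equiv.Perm (Fin m)) j)) :=
      POS_le X Y (σ₂ * σ₁)
    have step2 : ∑ j : Fin m, emd (fun i => X i j) (fun i => Y i ((σ₂ * σ₁ : Equiv.Perm (Fin m)) j))
        ≤ (∑ j : Fin m, emd (fun i => X i j) (fun i => Z i (σ₁ j)))
          + ∑ j : Fin m, emd (fun i => Z i (σ₁ j)) (fun i => Y i (σ₂ (σ₁ j))) := by
      rw [← Finset.sum_add_distrib]
      exact Finset.sum_le_sum fun j _ => emd_triangle _ _ _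
    have step3 : ∑ j : Fin m, emd (fun i => Z i (σ₁ j)) (fun i => Y i (σ₂ (σ₁ j)))
        = ∑ j : Fin m, emd (fun i => Z i j) (fun i => Y i (σ₂ j)) :=
      Equiv.sum_comp σ₁ (fun j => emd (fun i => Z i j) (fun i => Y i (σ₂ j)))
    have p1 : POS X Z = ∑ j : Fin m, emd (fun i => X i j) (fun i => Z i (σ₁ j)) := h1
    have p2 : POS Z Y = ∑ j : Fin m, emd (fun i => Z i j) (fun i => Y i (σ₂ j)) := h2
    rw [p1, p2, ← step3]
    exact le_trans step1 step2
  linarith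
end
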